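/- arXiv:math/9702232 — 10 statements merged into one kernel-verified Lean document; each statement's English description precedes it below -/
import Mathlib

section
/- Let Q ⊆ L be fields with L = Q[α] where α^n ∈ Q for some positive integer n, and set d = |L:Q|. Then d ≤ n, and if moreover α^d ∈ Q, then d divides n. -/
/-!
The degree `d` is the degree of the minimal polynomial of `α`, and `α` is a root of
`X ^ m - c` whenever `α ^ m = c ∈ Q`; hence `d ≤ m` for every such positive `m`, in
particular `d ≤ n`. If also `α ^ d ∈ Q`, then `α ^ (n % d) = α ^ n / (α ^ d) ^ (n / d) ∈ Q`
with `n % d < d`, which forces `n % d = 0`.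
-/

open Polynomial

theorem minpoly_natDegree_le_of_pow_mem_range {Q L : Type*} [Field Q] [Ring L] [Algebra Q L]
    {α : L} {m : ℕ} (hm : 0 < m) (h : α ^ m ∈ (algebraMap Q L).range) :
    (minpoly Q α).natDegree ≤ m := by
  obtain ⟨c, hc⟩ := h
  have hroot : aeval α (X ^ m - C c) = 0 := by simp [hc]
  have hle := minpoly.degree_le_of_ne_zero Q α (monic_X_pow_sub_C c hm.ne').ne_zero hroot
  rw [degree_X_pow_sub_C hm] at hle
  exact natDegree_le_of_degree_le hle

theorem Subfield.pow_mod_mem {L : Type*} [Field L] (K : Subfield L) {α : L} {n d : ℕ}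
    (hn : α ^ n ∈ K) (hd : α ^ d ∈ K) : α ^ (n % d) ∈ K := by
  rcases eq_or_ne α 0 with rfl | hα
  · rcases eq_or_ne (n % d) 0 with h | h
    · simp [h, K.one_mem]
    · simp [zero_pow h, K.zero_mem]
  · have hsplit : (α ^ d) ^ (n / d) * α ^ (n % d) = α ^ n := by
      rw [← pow_mul, ← pow_add, Nat.div_add_mod]
    rw [eq_div_of_mul_eq (pow_ne_zero _ (pow_ne_zero _ hα)) ((mul_comm _ _).trans hsplit)]
    exact K.div_mem hn (K.pow_mem hd _)

theorem Subfield.dvd_of_pow_mem_of_forall_le {L : Type*} [Field L] (K : Subfield L) {α : L}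
    {n d : ℕ} (hd : 0 < d) (hmin : ∀ m, 0 < m → α ^ m ∈ K → d ≤ m)
    (hn : α ^ n ∈ K) (hαd : α ^ d ∈ K) : d ∣ n := by
  refine Nat.dvd_of_mod_eq_zero (Nat.eq_zero_of_not_pos fun hpos => ?_)
  exact (hmin _ hpos (K.pow_mod_mem hn hαd)).not_gt (Nat.mod_lt n hd)

/-- If `L = Q[α]` with `α ^ n ∈ Q` for some `n > 0`, and `d = [L : Q]`, then
`d ≤ n`, and if moreover `α ^ d ∈ Q` then `d ∣ n`. -/
theorem stmt1 (Q L : Type*) [Field Q] [Field L] [Algebra Q L]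
    [FiniteDimensional Q L]
    (α : L) (n : ℕ) (hn : 0 < n)
    (hpow : α ^ n ∈ (algebraMap Q L).range)
    (hgen : Algebra.adjoin Q {α} = ⊤)
    (d : ℕ) (hd : d = Module.finrank Q L) :
    d ≤ n ∧ (α ^ d ∈ (algebraMap Q L).range → d ∣ n) := by
  have hdeg : d = (minpoly Q α).natDegree :=
    hd ▸ ((Field.primitive_element_iff_minpoly_natDegree_eq Q α).mp
      (IntermediateField.adjoin_eq_top_of_algebra Q {α} hgen)).symm
  have hmin : ∀ m, 0 < m → α ^ m ∈ (algebraMap Q L).range → d ≤ m := fun m hm h =>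
    hdeg ▸ minpoly_natDegree_le_of_pow_mem_range hm h
  refine ⟨hmin n hn hpow, fun hαd => ?_⟩
  have hrange : ∀ x, x ∈ (algebraMap Q L).range ↔ x ∈ (algebraMap Q L).fieldRange := fun _ =>
    RingHom.mem_range.trans RingHom.mem_fieldRange.symm
  exact (algebraMap Q L).fieldRange.dvd_of_pow_mem_of_forall_le (hd ▸ Module.finrank_pos)
    (fun m hm h => hmin m hm ((hrange _).mpr h)) ((hrange _).mp hpow) ((hrange _).mp hαd)
end

section
/- Let Q ⊆ L be fields with L = Q[α] where α^n ∈ Q for some positive integer n, and let d = [L:Q]. Then there exists an n-th root of unity ε ∈ L such that ε·α^d ∈ Q. In particular, if Q contains all n-th roots of unity lying in L, then α^d ∈ Q. -/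
/-!
Write `α ^ n = a` with `a ∈ Q` and `d = [L : Q]`. The norm is multiplicative and
`N_{L/Q}(a) = a ^ d`, so `N(α) ^ n = N(α ^ n) = a ^ d = (α ^ d) ^ n`; hence, for `α ≠ 0`,
`ε = N(α) / α ^ d` is an `n`-th root of unity with `ε * α ^ d = N(α) ∈ Q`.
-/

theorem exists_pow_eq_one_mul_pow_finrank_mem_range {Q L : Type*} [Field Q] [Field L]
    [Algebra Q L] [FiniteDimensional Q L] {α : L} {n : ℕ}
    (hpow : α ^ n ∈ (algebraMap Q L).range) :
    ∃ ε : L, ε ^ n = 1 ∧ ε * α ^ Module.finrank Q L ∈ (algebraMap Q L).range := by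
  obtain ⟨a, ha⟩ := hpow
  rcases eq_or_ne α 0 with rfl | hα
  · exact ⟨1, one_pow n, 0, by rw [one_mul, map_zero, zero_pow Module.finrank_pos.ne']⟩
  have hnorm : Algebra.norm Q α ^ n = a ^ Module.finrank Q L := by
    rw [← map_pow, ← ha, Algebra.norm_algebraMap]
  refine ⟨algebraMap Q L (Algebra.norm Q α) / α ^ Module.finrank Q L, ?_, _,
    (div_mul_cancel₀ _ (pow_ne_zero _ hα)).symm⟩
  rw [div_pow, ← map_pow, hnorm, map_pow, ha, ← pow_mul, ← pow_mul, mul_comm,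
    div_self (pow_ne_zero _ hα)]

theorem mem_range_of_mul_mem_range {Q L : Type*} [Field Q] [DivisionRing L] [Algebra Q L]
    {ε x : L} (hε : ε ≠ 0) (hεQ : ε ∈ (algebraMap Q L).range)
    (hεx : ε * x ∈ (algebraMap Q L).range) : x ∈ (algebraMap Q L).range := by
  obtain ⟨q, rfl⟩ := hεQ
  obtain ⟨c, hc⟩ := hεx
  exact ⟨q⁻¹ * c, by rw [map_mul, map_inv₀, hc, inv_mul_cancel_left₀ hε]⟩

theorem stmt2_general (Q L : Type*) [Field Q] [Field L] [Algebra Q L]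
    [FiniteDimensional Q L]
    (α : L) (n : ℕ) (hn : 0 < n)
    (hpow : α ^ n ∈ (algebraMap Q L).range)
    (d : ℕ) (hd : d = Module.finrank Q L) :
    (∃ ε : L, ε ^ n = 1 ∧ ε * α ^ d ∈ (algebraMap Q L).range) ∧
      ((∀ ζ : L, ζ ^ n = 1 → ζ ∈ (algebraMap Q L).range) →
        α ^ d ∈ (algebraMap Q L).range) := by
  subst hd
  obtain ⟨ε, hε, hεα⟩ := exists_pow_eq_one_mul_pow_finrank_mem_range hpow
  refine ⟨⟨ε, hε, hεα⟩, fun hroots => ?_⟩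
  exact mem_range_of_mul_mem_range (IsUnit.of_pow_eq_one hε hn.ne').ne_zero (hroots ε hε) hεα

/-- If `L = Q[α]` with `α ^ n ∈ Q` for some `n > 0`, and `d = [L : Q]`, then there
is an `n`-th root of unity `ε ∈ L` with `ε * α ^ d ∈ Q`; in particular, if `Q`
contains all `n`-th roots of unity in `L`, then `α ^ d ∈ Q`. -/
theorem stmt2 (Q L : Type*) [Field Q] [Field L] [Algebra Q L]
    [FiniteDimensional Q L]
    (α : L) (n : ℕ) (hn : 0 < n)
    (hpow : α ^ n ∈ (algebraMap Q L).range)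
    (hgen : Algebra.adjoin Q {α} = ⊤)
    (d : ℕ) (hd : d = Module.finrank Q L) :
    (∃ ε : L, ε ^ n = 1 ∧ ε * α ^ d ∈ (algebraMap Q L).range) ∧
      ((∀ ζ : L, ζ ^ n = 1 → ζ ∈ (algebraMap Q L).range) →
        α ^ d ∈ (algebraMap Q L).range) :=
  stmt2_general Q L α n hn hpow d hd
end

section
/- Let Q ⊆ L be a radical extension of degree p, where p is an odd prime, and suppose L is Galois over Q. Then L contains a root of unity different from ±1. -/
/-!
Write `L = Q[α]` with `α ^ n ∈ Q`. An automorphism of `L/Q` is determined by its value at `α`,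
and the Galois group has odd prime order `p`, so it has an element `σ ≠ 1`. Then
`ζ = σ α / α` is an `n`-th root of unity; `ζ = 1` would force `σ = 1`, and `ζ = -1` would make
`σ ^ 2` fix `α`, i.e. `σ` an element of order dividing `2` in a group of odd order.
-/

theorem eq_one_of_sq_eq_one_of_odd_natCard {G : Type*} [Group G] (hG : Odd (Nat.card G))
    {g : G} (hg : g ^ 2 = 1) : g = 1 := by
  have hgcd : g ^ Nat.gcd 2 (Nat.card G) = 1 := pow_gcd_eq_one.mpr ⟨hg, pow_card_eq_one'⟩
  rwa [(Nat.coprime_two_left.mpr hG).gcd_eq_one, pow_one] at hgcd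

theorem AlgEquiv.eq_one_of_apply_eq_self_of_adjoin_eq_top {K L : Type*} [CommSemiring K]
    [Semiring L] [Algebra K L] {α : L} (hα : Algebra.adjoin K {α} = ⊤) {σ : L ≃ₐ[K] L}
    (hσ : σ α = α) : σ = 1 :=
  AlgEquiv.coe_toAlgHom_injective <| AlgHom.ext_of_adjoin_eq_top hα <| by
    rintro x rfl
    exact hσ

theorem AlgHom.apply_div_self_pow_eq_one_of_pow_mem_range {K L : Type*} [CommRing K]
    [Field L] [Algebra K L] (σ : L →ₐ[K] L) {α : L} (hα : α ≠ 0) {n : ℕ}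
    (hn : α ^ n ∈ (algebraMap K L).range) : (σ α / α) ^ n = 1 := by
  obtain ⟨c, hc⟩ := hn
  have hσn : σ α ^ n = α ^ n := by rw [← map_pow, ← hc, σ.commutes]
  rw [div_pow, hσn, div_self (pow_ne_zero n hα)]

/-- A radical Galois extension of odd prime degree contains a root of unity
different from `±1` (so is not quasireal). -/
theorem stmt4 (Q L : Type*) [Field Q] [Field L] [Algebra Q L]
    [FiniteDimensional Q L] (p : ℕ) (hp : p.Prime) (hodd : Odd p)
    (hdeg : Module.finrank Q L = p)
    (hrad : ∃ α : L, (∃ n : ℕ, 0 < n ∧ α ^ n ∈ (algebraMap Q L).range) ∧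
      Algebra.adjoin Q {α} = ⊤)
    (hgal : IsGalois Q L) :
    ∃ ζ : L, (∃ n : ℕ, 0 < n ∧ ζ ^ n = 1) ∧ ζ ≠ 1 ∧ ζ ≠ -1 := by
  obtain ⟨α, ⟨n, hn, hαn⟩, hgen⟩ := hrad
  have hcard : Nat.card (L ≃ₐ[Q] L) = p := by rw [IsGalois.card_aut_eq_finrank, hdeg]
  have : Nontrivial (L ≃ₐ[Q] L) := Finite.one_lt_card_iff_nontrivial.mp (hcard ▸ hp.one_lt)
  obtain ⟨σ, hσ⟩ := exists_ne (1 : L ≃ₐ[Q] L)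
  have hσα : σ α ≠ α := fun h ↦ hσ (AlgEquiv.eq_one_of_apply_eq_self_of_adjoin_eq_top hgen h)
  have hα : α ≠ 0 := by
    rintro rfl
    exact hσα (map_zero σ)
  refine ⟨σ α / α, ⟨n, hn, σ.toAlgHom.apply_div_self_pow_eq_one_of_pow_mem_range hα hαn⟩,
    fun h ↦ hσα ((div_eq_one_iff_eq hα).mp h), fun h ↦ hσ ?_⟩
  have hneg : σ α = -α := by rw [div_eq_iff hα] at h; simpa using h
  have hsq : (σ ^ 2) α = α := by
    rw [pow_two, AlgEquiv.mul_apply, hneg, map_neg, hneg, neg_neg]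
  exact eq_one_of_sq_eq_one_of_odd_natCard (hcard ▸ hodd)
    (AlgEquiv.eq_one_of_apply_eq_self_of_adjoin_eq_top hgen hsq)
end

section
/- Let Q ⊆ L be a radical extension with [L:Q] = p an odd prime, and suppose L is not Galois over Q. Then L = Q[α] for some element α with α^p ∈ Q. -/
/-!
If `α ^ n = a ∈ Q` with `L = Q[α]`, then `N(α) ^ n = N(a) = a ^ p = (α ^ p) ^ n`, so
`ζ = N(α) / α ^ p` is a root of unity. If `ζ ∈ Q`, then `α ^ p = N(α) / ζ ∈ Q`. Otherwise `ζ`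
generates `L`, since `[L : Q]` is prime, so `L` is a cyclotomic extension and hence Galois.
-/

open Module

theorem Algebra.adjoin_singleton_eq_top_iff_of_finrank_prime {F A : Type*} [Field F] [Ring A]
    [IsDomain A] [Algebra F A] (hp : (finrank F A).Prime) {x : A} :
    Algebra.adjoin F {x} = ⊤ ↔ x ∉ (algebraMap F A).range := by
  have := Subalgebra.isSimpleOrder_of_finrank_prime F A hp
  constructor
  · rintro htop ⟨y, rfl⟩
    have hbot : Algebra.adjoin F {algebraMap F A y} = ⊥ := le_bot_iff.mp <|
      Algebra.adjoin_le (Set.singleton_subset_iff.mpr (Subalgebra.algebraMap_mem _ y))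
    exact bot_ne_top (hbot.symm.trans htop)
  · intro hx
    refine (eq_bot_or_eq_top (Algebra.adjoin F {x})).resolve_left fun hbot => hx ?_
    exact Algebra.mem_bot.mp (hbot ▸ Algebra.self_mem_adjoin_singleton F x)

theorem isGalois_of_adjoin_eq_top_of_pow_eq_one {K L : Type*} [Field K] [Field L] [Algebra K L]
    {ζ : L} {n : ℕ} (hn : 0 < n) (hζ : ζ ^ n = 1) (htop : Algebra.adjoin K {ζ} = ⊤) :
    IsGalois K L := by
  have hprim : IsPrimitiveRoot ζ (orderOf ζ) := IsPrimitiveRoot.orderOf ζ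
  have : NeZero (orderOf ζ) := ⟨(isOfFinOrder_iff_pow_eq_one.mpr ⟨n, hn, hζ⟩).orderOf_pos.ne'⟩
  have : IsCyclotomicExtension {orderOf ζ} K L := by
    refine (IsCyclotomicExtension.iff_singleton _ K L).mpr ⟨⟨ζ, hprim⟩, fun x => ?_⟩
    refine Algebra.adjoin_mono ?_ (htop ▸ Algebra.mem_top)
    exact Set.singleton_subset_iff.mpr (pow_orderOf_eq_one ζ)
  exact IsCyclotomicExtension.isGalois {orderOf ζ} K L

theorem Algebra.norm_div_pow_finrank_pow_eq_one {K L : Type*} [Field K] [Field L] [Algebra K L]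
    {α : L} (hα : α ≠ 0) {n : ℕ} {a : K} (ha : α ^ n = algebraMap K L a) :
    (algebraMap K L (Algebra.norm K α) / α ^ finrank K L) ^ n = 1 := by
  rw [div_pow, ← map_pow, ← map_pow, ha, Algebra.norm_algebraMap, map_pow, ← pow_mul, mul_comm,
    pow_mul, ha]
  exact div_self (pow_ne_zero _ (ha ▸ pow_ne_zero n hα))

theorem stmt5_general (Q L : Type*) [Field Q] [Field L] [Algebra Q L]
    (p : ℕ) (hp : p.Prime)
    (hdeg : Module.finrank Q L = p)
    (hrad : ∃ α : L, (∃ n : ℕ, 0 < n ∧ α ^ n ∈ (algebraMap Q L).range) ∧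
      Algebra.adjoin Q {α} = ⊤)
    (hngal : ¬ IsGalois Q L) :
    ∃ α : L, α ^ p ∈ (algebraMap Q L).range ∧ Algebra.adjoin Q {α} = ⊤ := by
  obtain ⟨α, ⟨n, hn, a, ha⟩, hadj⟩ := hrad
  have hprime : (finrank Q L).Prime := hdeg ▸ hp
  have hα : α ≠ 0 := by
    rintro rfl
    exact (Algebra.adjoin_singleton_eq_top_iff_of_finrank_prime hprime).mp hadj ⟨0, map_zero _⟩
  set ζ := algebraMap Q L (Algebra.norm Q α) / α ^ p
  have hζ : ζ ^ n = 1 := by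
    simpa only [hdeg] using Algebra.norm_div_pow_finrank_pow_eq_one hα ha.symm
  by_cases hζQ : ζ ∈ (algebraMap Q L).range
  · obtain ⟨x, hx⟩ := hζQ
    have hζ0 : ζ ≠ 0 := fun h => by simp [h, hn.ne'] at hζ
    refine ⟨α, ⟨Algebra.norm Q α / x, ?_⟩, hadj⟩
    rw [map_div₀, hx, div_div_cancel₀ (div_ne_zero_iff.mp hζ0).1]
  · have htop := (Algebra.adjoin_singleton_eq_top_iff_of_finrank_prime hprime).mpr hζQ
    exact (hngal (isGalois_of_adjoin_eq_top_of_pow_eq_one hn hζ htop)).elim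

/-- A radical extension of odd prime degree `p` that is not Galois is generated
by an element `α` with `α ^ p` in the ground field. -/
theorem stmt5 (Q L : Type*) [Field Q] [Field L] [Algebra Q L]
    [FiniteDimensional Q L] (p : ℕ) (hp : p.Prime) (hodd : Odd p)
    (hdeg : Module.finrank Q L = p)
    (hrad : ∃ α : L, (∃ n : ℕ, 0 < n ∧ α ^ n ∈ (algebraMap Q L).range) ∧
      Algebra.adjoin Q {α} = ⊤)
    (hngal : ¬ IsGalois Q L) :
    ∃ α : L, α ^ p ∈ (algebraMap Q L).range ∧ Algebra.adjoin Q {α} = ⊤ :=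
  stmt5_general Q L p hp hdeg hrad hngal
end

section
/- Let P be a partition of a finite group G (a set of subgroups with union G and pairwise intersections trivial), and suppose G acts by automorphisms on an abelian group A. If A contains an element whose order does not divide |P| − 1, then there is some member H ∈ P whose fixed-point subgroup in A is nontrivial. -/
/-- If `P` is a partition of a finite group `G` acting by automorphisms on an
abelian group `A`, and `A` has an element whose order does not divide `|P| - 1`,
then some member of the partition has nontrivial fixed points in `A`. -/
theorem stmt7 (G : Type*) [Group G] [Finite G]
    (A : Type*) [CommGroup A] [MulDistribMulAction G A]
    (P : Finset (Subgroup G))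
    (hcover : ∀ g : G, ∃ H ∈ P, g ∈ H)
    (hdisj : ∀ H ∈ P, ∀ K ∈ P, H ≠ K → H ⊓ K = ⊥)
    (a : A) (ha : ¬ orderOf a ∣ (P.card - 1)) :
    ∃ H ∈ P, ∃ b : A, b ≠ 1 ∧ ∀ h ∈ H, h • b = b := by
  classical
  haveI : Fintype G := Fintype.ofFinite G
  by_contra hcon
  push_neg at hcon
  have htriv : ∀ H ∈ P, ∀ b : A, (∀ h ∈ H, h • b = b) → b = 1 := by
    intro H hH b hb
    by_contra hb1
    obtain ⟨h, hh, hne⟩ := hcon H hH b hb1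
    exact hne (hb h hh)
  obtain ⟨H0, hH0, -⟩ := hcover 1
  have hPne : P.Nonempty := ⟨H0, hH0⟩
  have hcard : 1 ≤ P.card := Finset.card_pos.mpr hPne
  set N : Subgroup G → A := fun H => ∏ g : G, if g ∈ H then g • a else 1 with hNdef
  set T : A := ∏ g : G, g • a with hTdef
  -- each N H is H-fixed
  have hfix : ∀ H : Subgroup G, ∀ h0 ∈ H, h0 • N H = N H := by
    intro H h0 hh0
    calc h0 • N H = ∏ g : G, h0 • (if g ∈ H then g • a else 1) :=
          map_prod (MulDistribMulAction.toMonoidHom A h0) _ _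
      _ = ∏ g : G, (if g ∈ H then (h0 * g) • a else 1) := by
          refine Finset.prod_congr rfl fun g _ => ?_
          split <;> simp [mul_smul]
      _ = N H := by
          refine Fintype.prod_equiv (Equiv.mulLeft h0) _ _ fun g => ?_
          simp [Equiv.mulLeft, H.mul_mem_cancel_left hh0]
  -- T is G-fixed
  have hTfix : ∀ h0 : G, h0 • T = T := by
    intro h0
    calc h0 • T = ∏ g : G, h0 • (g • a) :=
          map_prod (MulDistribMulAction.toMonoidHom A h0) _ _
      _ = ∏ g : G, (h0 * g) • a :=
          Finset.prod_congr rfl fun g _ => (mul_smul h0 g a).symm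
      _ = T := Fintype.prod_equiv (Equiv.mulLeft h0) _ _ fun g => rfl
  have hN1 : ∀ H ∈ P, N H = 1 := fun H hH => htriv H hH _ (hfix H)
  have hT1 : T = 1 := htriv H0 hH0 T (fun h _ => hTfix h)
  have key : ∏ H ∈ P, N H = T * a ^ (P.card - 1) := by
    have hswap : ∏ H ∈ P, N H
        = ∏ g : G, ∏ H ∈ P, (if g ∈ H then g • a else 1) := Finset.prod_comm
    have inner : ∀ g : G, (∏ H ∈ P, (if g ∈ H then g • a else 1))
        = (g • a) * (if g = 1 then a ^ (P.card - 1) else 1) := by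
      intro g
      by_cases hg : g = 1
      · subst hg
        rw [if_pos rfl, Finset.prod_congr rfl (fun H _ => if_pos H.one_mem),
          Finset.prod_const, one_smul]
        rw [← Nat.sub_add_cancel hcard, Nat.add_sub_cancel, pow_succ, mul_comm]
      · obtain ⟨H1, hH1, hgH1⟩ := hcover g
        rw [if_neg hg, mul_one]
        have := Finset.prod_eq_single_of_mem (f := fun H : Subgroup G =>
            if g ∈ H then g • a else 1) H1 hH1 ?_
        · rw [this]; simp [hgH1]
        · intro K hK hne
          have hgK : g ∉ K := by
            intro hgK
            have : g ∈ K ⊓ H1 := ⟨hgK, hgH1⟩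
            rw [hdisj K hK H1 hH1 hne] at this
            exact hg this
          simp [hgK]
    rw [hswap, Finset.prod_congr rfl (fun g _ => inner g), Finset.prod_mul_distrib]
    congr 1
    rw [Finset.prod_ite_eq' Finset.univ (1 : G) (fun _ => a ^ (P.card - 1)),
      if_pos (Finset.mem_univ _)]
  have : (1 : A) = T * a ^ (P.card - 1) := by
    rw [← key]
    exact (Finset.prod_eq_one hN1).symm
  rw [hT1, one_mul] at this
  exact ha (orderOf_dvd_of_pow_eq_one this.symm)
end

section
/- Let F be a finite Frobenius group with kernel N and complement H, acting linearly on a nontrivial vector space V over a field whose characteristic does not divide |N|. Then either N or H has a nonzero fixed vector in V. -/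
/-!
Suppose neither `N` nor `H` fixes a nonzero vector. Since `∑_{k ∈ K} k • w` is fixed by `K`, the
operators `∑_{n ∈ N} n` and `∑_{h ∈ H} h` vanish on `V`, hence so does `∑_{g ∈ G} g = ∑_n ∑_h n h`.
The Frobenius condition makes `(n, h) ↦ n h n⁻¹` injective on `N × (H \ {1})`, and counting shows
that its image is `G \ N`. Evaluating `∑_{g ∈ G} g • v` along the partition
`G = N ⊔ ⋃_n n (H \ {1}) n⁻¹` gives `0 = 0 + ∑_n n (0 - 1) n⁻¹ v = -|N| v`, so `v = 0` since `|N|` is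
invertible in the field.
-/

open Finset

section FixedVectors

variable {G V : Type*} [Group G] [AddCommGroup V] [DistribMulAction G V]

theorem Subgroup.smul_sum_smul_of_mem (K : Subgroup G) [Fintype K] {g : G} (hg : g ∈ K)
    (v : V) :
    g • ∑ k : K, (k : G) • v = ∑ k : K, (k : G) • v := by
  rw [smul_sum]
  exact Fintype.sum_equiv (Equiv.mulLeft ⟨g, hg⟩) _ _ fun k => (mul_smul _ _ _).symm

theorem Subgroup.sum_smul_eq_zero_of_not_exists_fixed (K : Subgroup G) [Fintype K]
    (hK : ¬ ∃ v : V, v ≠ 0 ∧ ∀ k ∈ K, k • v = v) (v : V) : ∑ k : K, (k : G) • v = 0 := by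
  by_contra hne
  exact hK ⟨_, hne, fun k hk => K.smul_sum_smul_of_mem hk v⟩

theorem Subgroup.IsComplement'.sum_smul [Fintype G] {H K : Subgroup G} [Fintype H]
    [Fintype K] (hHK : H.IsComplement' K) (v : V) :
    ∑ g : G, g • v = ∑ h : H, (h : G) • ∑ k : K, (k : G) • v := by
  rw [← Fintype.sum_bijective (fun x : H × K => (x.1 : G) * x.2) hHK _ _ fun _ => rfl,
    Fintype.sum_prod_type]
  simp only [smul_sum, mul_smul]

theorem Subgroup.sum_erase_one_conj_smul {H : Subgroup G} [Fintype H] [DecidableEq H]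
    (hH : ∀ w : V, ∑ h : H, (h : G) • w = 0) (g : G) (v : V) :
    ∑ h ∈ univ.erase (1 : H), (g * h * g⁻¹) • v = -v := by
  have hsplit := add_sum_erase univ (fun h : H => (h : G) • g⁻¹ • v) (mem_univ 1)
  rw [hH, OneMemClass.coe_one, one_smul, add_eq_zero_iff_eq_neg'] at hsplit
  simp only [mul_smul, ← smul_sum, hsplit, smul_neg, smul_inv_smul]

end FixedVectors

section Frobenius

variable {G : Type*} [Group G] {N H : Subgroup G} [N.Normal]

theorem conj_notMem_of_inf_eq_bot (hNH : N ⊓ H = ⊥) {h : G} (hh : h ∈ H) (h1 : h ≠ 1)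
    (g : G) :
    g * h * g⁻¹ ∉ N := by
  intro hc
  have hN := ‹N.Normal›.conj_mem _ hc g⁻¹
  rw [show g⁻¹ * (g * h * g⁻¹) * g⁻¹⁻¹ = h by group] at hN
  exact h1 (Subgroup.mem_bot.1 (hNH ▸ ⟨hN, hh⟩))

theorem eq_of_conj_eq_of_inf_eq_bot (hNH : N ⊓ H = ⊥) {n h₁ h₂ : G} (hn : n ∈ N)
    (hh₁ : h₁ ∈ H) (hh₂ : h₂ ∈ H) (hconj : n * h₁ * n⁻¹ = h₂) : h₁ = h₂ := by
  have hmemN : h₂ * h₁⁻¹ ∈ N := by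
    rw [← hconj, show n * h₁ * n⁻¹ * h₁⁻¹ = n * (h₁ * n⁻¹ * h₁⁻¹) by group]
    exact N.mul_mem hn (‹N.Normal›.conj_mem _ (N.inv_mem hn) h₁)
  have hmem : h₂ * h₁⁻¹ ∈ N ⊓ H := ⟨hmemN, H.mul_mem hh₂ (H.inv_mem hh₁)⟩
  rw [hNH, Subgroup.mem_bot, mul_inv_eq_one] at hmem
  exact hmem.symm

theorem conj_injOn [Fintype N] [Fintype H] [DecidableEq H] (hNH : N ⊓ H = ⊥)
    (hfrob : ∀ h ∈ H, h ≠ 1 → ∀ n ∈ N, h * n * h⁻¹ = n → n = 1) :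
    Set.InjOn (fun p : N × H => (p.1 : G) * p.2 * (p.1 : G)⁻¹)
      ↑(univ ×ˢ univ.erase 1 : Finset (N × H)) := by
  rintro ⟨n₁, h₁⟩ hp₁ ⟨n₂, h₂⟩ -
    (heq : (n₁ : G) * h₁ * (n₁ : G)⁻¹ = n₂ * h₂ * (n₂ : G)⁻¹)
  have hh₁ : h₁ ≠ 1 := (mem_erase.1 (mem_product.1 hp₁).2).1
  set m : G := (n₂ : G)⁻¹ * n₁
  have hm : m ∈ N := N.mul_mem (N.inv_mem n₂.2) n₁.2
  have hconj : m * h₁ * m⁻¹ = h₂ :=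
    calc m * h₁ * m⁻¹ = (n₂ : G)⁻¹ * (n₁ * h₁ * (n₁ : G)⁻¹) * n₂ := by simp only [m]; group
      _ = h₂ := by rw [heq]; group
  have hh : h₁ = h₂ := Subtype.ext (eq_of_conj_eq_of_inf_eq_bot hNH hm h₁.2 h₂.2 hconj)
  have hm1 : m = 1 := by
    refine hfrob h₁ h₁.2 (by exact_mod_cast hh₁) m hm ?_
    rw [← hh] at hconj
    calc (h₁ : G) * m * (h₁ : G)⁻¹ = m * h₁ * m⁻¹ * m * (h₁ : G)⁻¹ := by rw [hconj]
      _ = m := by group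
  simp only [m, inv_mul_eq_one] at hm1
  exact Prod.ext (Subtype.ext hm1.symm) hh

theorem image_conj_eq_filter_notMem [Fintype G] [DecidableEq G] [DecidablePred (· ∈ N)]
    [Fintype N] [Fintype H] [DecidableEq H] (hcompl : N.IsComplement' H)
    (hfrob : ∀ h ∈ H, h ≠ 1 → ∀ n ∈ N, h * n * h⁻¹ = n → n = 1) :
    (univ ×ˢ univ.erase (1 : H)).image (fun p : N × H => (p.1 : G) * p.2 * (p.1 : G)⁻¹) =
      univ.filter (· ∉ N) := by
  have hNH : N ⊓ H = ⊥ := disjoint_iff.1 hcompl.disjoint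
  have hinj := conj_injOn hNH hfrob
  refine eq_of_subset_of_card_le ?_ ?_
  · simp only [subset_iff, mem_image, mem_product, mem_erase, mem_filter, mem_univ, true_and,
      and_true]
    rintro _ ⟨⟨n, h⟩, hh, rfl⟩
    exact conj_notMem_of_inf_eq_bot hNH h.2 (by exact_mod_cast hh) n
  · have hcard := hcompl.card_mul_card
    have hN : #(univ.filter (· ∈ N)) = Fintype.card N := by
      rw [Fintype.card_subtype]
    have hsplit := card_filter_add_card_filter_not (s := (univ : Finset G)) (· ∈ N)
    rw [card_univ] at hsplit
    rw [card_image_of_injOn hinj, card_product, card_erase_of_mem (mem_univ _), card_univ,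
      card_univ]
    simp only [Nat.card_eq_fintype_card] at hcard
    rw [Nat.mul_sub_one]
    omega

theorem sum_eq_sum_add_sum_conj {M : Type*} [AddCommMonoid M] [Fintype G] [DecidableEq G]
    [DecidablePred (· ∈ N)] [Fintype N] [Fintype H] [DecidableEq H] (hcompl : N.IsComplement' H)
    (hfrob : ∀ h ∈ H, h ≠ 1 → ∀ n ∈ N, h * n * h⁻¹ = n → n = 1) (f : G → M) :
    ∑ g, f g = ∑ n : N, f n + ∑ n : N, ∑ h ∈ univ.erase (1 : H), f (n * h * (n : G)⁻¹) := by
  have hinj := conj_injOn (disjoint_iff.1 hcompl.disjoint) hfrob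
  rw [← sum_filter_add_sum_filter_not univ (· ∈ N), ← image_conj_eq_filter_notMem hcompl hfrob,
    sum_image hinj, sum_product, sum_subtype (p := (· ∈ N)) _ (by simp) f]

theorem card_smul_eq_zero_of_sum_smul_eq_zero {V : Type*} [AddCommGroup V]
    [DistribMulAction G V] [Fintype G] [DecidableEq G] [DecidablePred (· ∈ N)] [Fintype N]
    [Fintype H] [DecidableEq H] (hcompl : N.IsComplement' H)
    (hfrob : ∀ h ∈ H, h ≠ 1 → ∀ n ∈ N, h * n * h⁻¹ = n → n = 1)
    (hN : ∀ w : V, ∑ n : N, (n : G) • w = 0) (hH : ∀ w : V, ∑ h : H, (h : G) • w = 0) (v : V) :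
    Fintype.card N • v = 0 := by
  have hpart := sum_eq_sum_add_sum_conj hcompl hfrob (· • v)
  simp only [hcompl.sum_smul, hH, smul_zero, sum_const_zero, hN, zero_add,
    Subgroup.sum_erase_one_conj_smul hH, sum_const, card_univ, smul_neg] at hpart
  exact neg_eq_zero.1 hpart.symm

end Frobenius

theorem eq_zero_of_nsmul_eq_zero_of_not_ringChar_dvd {F V : Type*} [DivisionRing F]
    [AddCommGroup V] [Module F V] {n : ℕ} (hn : ¬ ringChar F ∣ n) {v : V} (h : n • v = 0) :
    v = 0 := by
  rw [← Nat.cast_smul_eq_nsmul F, smul_eq_zero] at h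
  exact h.resolve_left fun h0 => hn ((ringChar.spec F n).1 h0)

theorem stmt9_general (G : Type*) [Group G] [Finite G] (N H : Subgroup G)
    [N.Normal] (hNH : N ⊓ H = ⊥) (hNHtop : N ⊔ H = ⊤)
    (hfrob : ∀ h ∈ H, h ≠ 1 → ∀ n ∈ N, h * n * h⁻¹ = n → n = 1)
    (F : Type*) [Field F] (hchar : ¬ (ringChar F ∣ Nat.card N))
    (V : Type*) [AddCommGroup V] [Module F V] [Nontrivial V]
    [DistribMulAction G V] :
    (∃ v : V, v ≠ 0 ∧ ∀ n ∈ N, n • v = v) ∨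
      (∃ v : V, v ≠ 0 ∧ ∀ h ∈ H, h • v = v) := by
  classical
  have := Fintype.ofFinite G
  have hcompl : N.IsComplement' H :=
    Subgroup.isComplement'_of_disjoint_and_mul_eq_univ (disjoint_iff.2 hNH)
      (by rw [← Subgroup.normal_mul, hNHtop, Subgroup.coe_top])
  rw [or_iff_not_imp_left]
  intro hN
  by_contra hH
  obtain ⟨v, hv⟩ := exists_ne (0 : V)
  have hcard := card_smul_eq_zero_of_sum_smul_eq_zero hcompl hfrob
    (N.sum_smul_eq_zero_of_not_exists_fixed hN) (H.sum_smul_eq_zero_of_not_exists_fixed hH) v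
  rw [← Nat.card_eq_fintype_card] at hcard
  exact hv (eq_zero_of_nsmul_eq_zero_of_not_ringChar_dvd hchar hcard)

/-- If a finite Frobenius group `G` with kernel `N` and complement `H` acts
linearly on a nonzero vector space `V` over a field whose characteristic does not
divide `|N|`, then `N` or `H` has a nonzero fixed vector. -/
theorem stmt9 (G : Type*) [Group G] [Finite G] (N H : Subgroup G)
    [N.Normal] (hNH : N ⊓ H = ⊥) (hNHtop : N ⊔ H = ⊤)
    (hfrob : ∀ h ∈ H, h ≠ 1 → ∀ n ∈ N, h * n * h⁻¹ = n → n = 1)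
    (F : Type*) [Field F] (hchar : ¬ (ringChar F ∣ Nat.card N))
    (V : Type*) [AddCommGroup V] [Module F V] [Nontrivial V]
    [DistribMulAction G V] [SMulCommClass G F V] :
    (∃ v : V, v ≠ 0 ∧ ∀ n ∈ N, n • v = v) ∨
      (∃ v : V, v ≠ 0 ∧ ∀ h ∈ H, h • v = v) :=
  stmt9_general G N H hNH hNHtop hfrob F hchar V
end

section
/- Let Q be a field, and let L and S be extensions of Q inside a common field, where L is a radical extension of Q and S is a finite Galois extension of Q. If both L and S are quasireal (characteristic zero and containing no roots of unity other than ±1), then [L ∩ S : Q] ≤ 2. -/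
/-! Write `L = Q(α)` with `αⁿ ∈ Q`, `M = L ∩ S` and `d = [L : M] = [M(α) : M]`. The norm
`N_{M(α)/M}(α) ∈ M` and `α ^ d` have the same `n`-th power, so they differ by a root of unity of
the quasireal field `L`, i.e. by `±1`, and `α ^ d ∈ M`. As `α` is a root of `X ^ d - α ^ d`,
`[L : Q(α ^ d)] ≤ d = [L : M]`, which forces `M = Q(α ^ d)`. Finally every conjugate of `α ^ d`
lies in the normal field `S` and has the same `n`-th power as `α ^ d`, so it is `± α ^ d`; hence
`[M : Q] ≤ 2`. -/

/-- A field is quasireal if it has characteristic zero and its only roots of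
unity are `±1`. -/
def IsQuasireal (L : Type*) [Field L] : Prop :=
  CharZero L ∧ ∀ ζ : L, (∃ n : ℕ, 0 < n ∧ ζ ^ n = 1) → ζ = 1 ∨ ζ = -1

/-- `B = A[α]` for some `α` with a positive power of `α` in `A`
(a single radical step, inside a fixed ambient extension `E` of `Q`). -/
def RadicalStep (Q E : Type*) [Field Q] [Field E] [Algebra Q E]
    (A B : IntermediateField Q E) : Prop :=
  ∃ α : E, (∃ n : ℕ, 0 < n ∧ α ^ n ∈ A) ∧ B = A ⊔ IntermediateField.adjoin Q {α}

/-- `B` is obtained from `A` by a finite tower of radical extensions. -/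
def IsRepeatedRadical (Q E : Type*) [Field Q] [Field E] [Algebra Q E]
    (A B : IntermediateField Q E) : Prop :=
  Relation.ReflTransGen (RadicalStep Q E) A B

open IntermediateField Module Polynomial

namespace IsQuasireal

theorem eq_or_eq_neg_of_pow_eq {F : Type*} [Field F] (hF : IsQuasireal F) {x y : F} {n : ℕ}
    (hn : 0 < n) (h : x ^ n = y ^ n) : x = y ∨ x = -y := by
  rcases eq_or_ne y 0 with rfl | hy
  · left
    simpa [hn.ne'] using h
  · refine (hF.2 (x / y) ⟨n, hn, by rw [div_pow, h, div_self (pow_ne_zero _ hy)]⟩).imp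
      (div_eq_one_iff_eq hy).1 fun h1 ↦ ?_
    rw [div_eq_iff hy, neg_one_mul] at h1
    exact h1

theorem eq_or_eq_neg_of_pow_eq_of_mem {K E : Type*} [Field K] [Field E] [Algebra K E]
    {L : IntermediateField K E} (hL : IsQuasireal L) {x y : E} (hx : x ∈ L) (hy : y ∈ L)
    {n : ℕ} (hn : 0 < n) (h : x ^ n = y ^ n) : x = y ∨ x = -y := by
  simpa [Subtype.ext_iff] using
    hL.eq_or_eq_neg_of_pow_eq (x := ⟨x, hx⟩) (y := ⟨y, hy⟩) hn (Subtype.ext h)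

theorem natDegree_minpoly_le_two {K F : Type*} [Field K] [Field F] [Algebra K F]
    [IsGalois K F] (hF : IsQuasireal F) {γ : F} {b : K} {n : ℕ} (hn : 0 < n)
    (hγ : γ ^ n = algebraMap K F b) : (minpoly K γ).natDegree ≤ 2 := by
  classical
  have hdvd : minpoly K γ ∣ X ^ n - C b := minpoly.dvd K γ (by simp [hγ])
  have hroots : (minpoly K γ).rootSet F ⊆ {γ, -γ} := by
    intro r hr
    rw [mem_rootSet] at hr
    have hr' := aeval_eq_zero_of_dvd_aeval_eq_zero hdvd hr.2
    simp only [map_sub, map_pow, aeval_X, aeval_C, sub_eq_zero, ← hγ] at hr'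
    exact hF.eq_or_eq_neg_of_pow_eq hn hr'
  rw [← card_rootSet_eq_natDegree (Algebra.IsSeparable.isSeparable K γ) (Normal.splits' γ),
    ← Set.toFinset_card]
  exact (Finset.card_le_card (by simpa using hroots)).trans Finset.card_le_two

end IsQuasireal

section RadicalElement

variable {K F : Type*} [Field K] [Field F] [Algebra K F]

theorem algebraMap_norm_gen_pow_eq {α : F} {a : K} {n : ℕ} (h : α ^ n = algebraMap K F a) :
    algebraMap K F (Algebra.norm K (AdjoinSimple.gen K α)) ^ n = (α ^ finrank K K⟮α⟯) ^ n := by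
  have hgen : AdjoinSimple.gen K α ^ n = algebraMap K K⟮α⟯ a := Subtype.ext h
  rw [← map_pow, ← map_pow, hgen, Algebra.norm_algebraMap, map_pow, ← h, ← pow_mul, ← pow_mul,
    mul_comm]

theorem finrank_adjoin_simple_le_of_pow_eq {α : F} {a : K} {d : ℕ} (hd : 0 < d)
    (h : α ^ d = algebraMap K F a) : finrank K K⟮α⟯ ≤ d := by
  have hroot : aeval α (X ^ d - C a) = 0 := by simp [h]
  rw [adjoin.finrank ⟨_, monic_X_pow_sub_C a hd.ne', hroot⟩]
  calc (minpoly K α).natDegree ≤ (X ^ d - C a).natDegree :=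
        natDegree_le_of_dvd (minpoly.dvd K α hroot) (X_pow_sub_C_ne_zero hd a)
    _ = d := natDegree_X_pow_sub_C

theorem finrank_mul_finrank_adjoin_simple {α : F} {M : IntermediateField K F} (hM : M ≤ K⟮α⟯) :
    finrank K M * finrank M M⟮α⟯ = finrank K K⟮α⟯ := by
  rw [← finrank_bot_mul_relfinrank hM, relfinrank_eq_finrank_of_le hM, extendScalars_adjoin hM]

theorem eq_adjoin_pow_finrank {α : F} (hα : IsIntegral K α) {M : IntermediateField K F}
    (hM : M ≤ K⟮α⟯) (hαM : α ^ finrank M M⟮α⟯ ∈ M) : M = K⟮α ^ finrank M M⟮α⟯⟯ := by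
  set d := finrank M M⟮α⟯
  have hTM : K⟮α ^ d⟯ ≤ M := adjoin_simple_le_iff.2 hαM
  have hαint : IsIntegral M α := hα.tower_top
  have := adjoin.finiteDimensional hαint
  have hd : 0 < d := finrank_pos
  have hTd : finrank K⟮α ^ d⟯ K⟮α ^ d⟯⟮α⟯ ≤ d :=
    finrank_adjoin_simple_le_of_pow_eq hd (a := AdjoinSimple.gen K (α ^ d)) rfl
  have hle : finrank K M * d ≤ finrank K K⟮α ^ d⟯ * d := by
    rw [finrank_mul_finrank_adjoin_simple hM,
      ← finrank_mul_finrank_adjoin_simple (hTM.trans hM)]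
    gcongr
  have := adjoin.finiteDimensional hα
  have : FiniteDimensional K M :=
    .of_injective (IntermediateField.inclusion hM).toLinearMap (inclusion_injective hM)
  exact (eq_of_le_of_finrank_le hTM (Nat.le_of_mul_le_mul_right hle hd)).symm

end RadicalElement

theorem IsQuasireal.pow_finrank_adjoin_mem {Q E : Type*} [Field Q] [Field E] [Algebra Q E]
    {M L : IntermediateField Q E} (hL : IsQuasireal L) (hML : M ≤ L) {α : E} (hαL : α ∈ L)
    {n : ℕ} (hn : 0 < n) (hαn : α ^ n ∈ M) : α ^ finrank M M⟮α⟯ ∈ M := by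
  set N : E := algebraMap M E (Algebra.norm M (AdjoinSimple.gen M α))
  have hNM : N ∈ M := (Algebra.norm M (AdjoinSimple.gen M α)).2
  have hN : N ^ n = (α ^ finrank M M⟮α⟯) ^ n :=
    algebraMap_norm_gen_pow_eq (a := ⟨α ^ n, hαn⟩) rfl
  rcases hL.eq_or_eq_neg_of_pow_eq_of_mem (hML hNM) (pow_mem hαL _) hn hN with h | h
  · exact h ▸ hNM
  · simpa [h] using neg_mem hNM

theorem stmt10_general (Q E : Type*) [Field Q] [Field E] [Algebra Q E]
    (L S : IntermediateField Q E)
    (hLrad : ∃ α : E, (∃ n : ℕ, 0 < n ∧ α ^ n ∈ (⊥ : IntermediateField Q E)) ∧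
      L = IntermediateField.adjoin Q {α})
    (hSgal : IsGalois Q S)
    (hLqr : IsQuasireal L) (hSqr : IsQuasireal S) :
    Module.finrank Q ↥(L ⊓ S) ≤ 2 := by
  obtain ⟨α, ⟨n, hn, hαn⟩, rfl⟩ := hLrad
  obtain ⟨q, hq⟩ := mem_bot.1 hαn
  set M := Q⟮α⟯ ⊓ S
  set d := finrank M M⟮α⟯
  have hβM : α ^ d ∈ M :=
    hLqr.pow_finrank_adjoin_mem inf_le_left (mem_adjoin_simple_self Q α) hn ((bot_le : ⊥ ≤ M) hαn)
  have hα : IsIntegral Q α := .of_pow hn (hq ▸ isIntegral_algebraMap)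
  have hM : M = Q⟮α ^ d⟯ := eq_adjoin_pow_finrank hα inf_le_left hβM
  rw [hM, adjoin.finrank (hα.pow d),
    ← minpoly_eq (⟨α ^ d, (inf_le_right : M ≤ S) hβM⟩ : S)]
  refine hSqr.natDegree_minpoly_le_two (b := q ^ d) hn (Subtype.ext ?_)
  change (α ^ d) ^ n = algebraMap Q E (q ^ d)
  rw [map_pow, hq, ← pow_mul, ← pow_mul, mul_comm]

/-- If `L` is a radical extension of `Q` and `S` is a finite Galois extension of
`Q`, inside a common field `E`, and both `L` and `S` are quasireal, then
`[L ∩ S : Q] ≤ 2`. -/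
theorem stmt10 (Q E : Type*) [Field Q] [Field E] [Algebra Q E]
    (L S : IntermediateField Q E)
    (hLrad : ∃ α : E, (∃ n : ℕ, 0 < n ∧ α ^ n ∈ (⊥ : IntermediateField Q E)) ∧
      L = IntermediateField.adjoin Q {α})
    (hSgal : IsGalois Q S) (hSfin : FiniteDimensional Q S)
    (hLqr : IsQuasireal L) (hSqr : IsQuasireal S) :
    Module.finrank Q ↥(L ⊓ S) ≤ 2 :=
  stmt10_general Q E L S hLrad hSgal hLqr hSqr
end

section
/- Let Q ⊆ L with L quasireal. Then L is a repeated radical extension of Q if and only if there is a tower of fields Q = L_0 ⊆ L_1 ⊆ ... ⊆ L_m = L such that each extension L_{i-1} ⊆ L_i is a radical extension of prime degree. -/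
/-!
A radical step `A ⊆ A(α)` with `α ^ (p * m) ∈ A`, `p` prime, factors as `A ⊆ A(α ^ p) ⊆ A(α)`,
so it suffices to treat a prime exponent `p`. Then either `α ∈ A`, or `X ^ p - α ^ p` is
irreducible over `A` and the step has degree `p`: by Kummer theory the only obstruction is
`α ^ p = b ^ p` for some `b ∈ A`, and in a quasireal field this forces `α = ±b ∈ A`.
-/

open IntermediateField Polynomial

namespace IsQuasireal

variable {L : Type*} [Field L]

theorem eq_or_eq_neg_of_pow_eq_pow (hL : IsQuasireal L) {n : ℕ} (hn : n ≠ 0) {x y : L}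
    (h : x ^ n = y ^ n) : x = y ∨ x = -y := by
  rcases eq_or_ne y 0 with rfl | hy
  · rw [zero_pow hn, pow_eq_zero_iff hn] at h
    simp [h]
  have hroot : (x / y) ^ n = 1 := by rw [div_pow, h, div_self (pow_ne_zero n hy)]
  rcases hL.2 _ ⟨n, Nat.pos_of_ne_zero hn, hroot⟩ with h1 | h1
  · exact .inl ((div_eq_one_iff_eq hy).1 h1)
  · exact .inr (by rw [div_eq_iff hy] at h1; simpa using h1)

theorem finrank_adjoin_simple_of_pow_eq {K : Type*} [Field K] [Algebra K L]
    (hL : IsQuasireal L) {p : ℕ} (hp : p.Prime) {α : L} {c : K}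
    (hc : α ^ p = algebraMap K L c) (hα : α ∉ (⊥ : IntermediateField K L)) :
    Module.finrank K K⟮α⟯ = p := by
  have hirr : Irreducible (X ^ p - C c) := by
    refine X_pow_sub_C_irreducible_of_prime hp fun b hb => hα ?_
    rw [← hb, map_pow] at hc
    rcases hL.eq_or_eq_neg_of_pow_eq_pow hp.ne_zero hc with rfl | rfl
    · exact IntermediateField.algebraMap_mem _ b
    · exact neg_mem (IntermediateField.algebraMap_mem _ b)
  have hmonic : (X ^ p - C c).Monic := monic_X_pow_sub_C c hp.ne_zero
  have hroot : aeval α (X ^ p - C c) = 0 := by simp [hc]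
  rw [adjoin.finrank ⟨_, hmonic, hroot⟩,
    ← minpoly.eq_of_irreducible_of_monic hirr hroot hmonic, natDegree_X_pow_sub_C]

end IsQuasireal

section Tower

variable {Q L : Type*} [Field Q] [Field L] [Algebra Q L]

def PrimeRadicalStep (A B : IntermediateField Q L) : Prop :=
  RadicalStep Q L A B ∧ ∃ h : A ≤ B, (Module.finrank A (extendScalars h)).Prime

theorem extendScalars_sup_adjoin_simple (A : IntermediateField Q L) (α : L) :
    extendScalars (le_sup_left : A ≤ A ⊔ Q⟮α⟯) = A⟮α⟯ :=
  restrictScalars_injective Q <| by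
    rw [extendScalars_restrictScalars, restrictScalars_adjoin_eq_sup]

theorem sup_adjoin_eq_left_of_mem {A : IntermediateField Q L} {α : L} (h : α ∈ A) :
    A ⊔ Q⟮α⟯ = A :=
  sup_eq_left.2 (adjoin_simple_le_iff.2 h)

theorem reflTransGen_primeRadicalStep_sup_adjoin_of_prime (hL : IsQuasireal L)
    (A : IntermediateField Q L) {p : ℕ} (hp : p.Prime) {α : L} (hα : α ^ p ∈ A) :
    Relation.ReflTransGen PrimeRadicalStep A (A ⊔ Q⟮α⟯) := by
  by_cases hαA : α ∈ A
  · rw [sup_adjoin_eq_left_of_mem hαA]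
  refine .single ⟨⟨α, ⟨p, hp.pos, hα⟩, rfl⟩, le_sup_left, ?_⟩
  rw [extendScalars_sup_adjoin_simple,
    hL.finrank_adjoin_simple_of_pow_eq hp (c := ⟨_, hα⟩) rfl]
  · exact hp
  · exact fun ⟨b, hb⟩ => hαA (hb ▸ b.2)

theorem reflTransGen_primeRadicalStep_sup_adjoin (hL : IsQuasireal L) {n : ℕ} (hn : n ≠ 0) :
    ∀ (A : IntermediateField Q L) {α : L}, α ^ n ∈ A →
      Relation.ReflTransGen PrimeRadicalStep A (A ⊔ Q⟮α⟯) := by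
  induction n using induction_on_primes with
  | zero => exact absurd rfl hn
  | one =>
    intro A α hα
    rw [sup_adjoin_eq_left_of_mem (pow_one α ▸ hα)]
  | prime_mul p m hp ih =>
    intro A α hα
    rw [pow_mul] at hα
    have hαp : α ^ p ∈ A ⊔ Q⟮α ^ p⟯ :=
      (le_sup_right : Q⟮α ^ p⟯ ≤ _) (mem_adjoin_simple_self Q (α ^ p))
    have hsup : A ⊔ Q⟮α ^ p⟯ ⊔ Q⟮α⟯ = A ⊔ Q⟮α⟯ := by
      rw [sup_assoc, sup_eq_right.2 (adjoin_simple_le_iff.2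
        (pow_mem (mem_adjoin_simple_self Q α) p))]
    rw [← hsup]
    exact (ih (right_ne_zero_of_mul hn) A hα).trans
      (reflTransGen_primeRadicalStep_sup_adjoin_of_prime hL _ hp hαp)

theorem IsRepeatedRadical.reflTransGen_primeRadicalStep (hL : IsQuasireal L)
    {A B : IntermediateField Q L} (h : IsRepeatedRadical Q L A B) :
    Relation.ReflTransGen PrimeRadicalStep A B := by
  induction h with
  | refl => exact .refl
  | tail _ hstep ih =>
    obtain ⟨α, ⟨n, hn, hα⟩, rfl⟩ := hstep
    exact ih.trans (reflTransGen_primeRadicalStep_sup_adjoin hL hn.ne' _ hα)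

end Tower

/-- If `L` is quasireal, then `L` is a repeated radical extension of `Q` if and
only if there is a tower of fields from `Q` up to `L` each step of which is a
radical extension of prime degree. -/
theorem stmt13 (Q L : Type*) [Field Q] [Field L] [Algebra Q L]
    (hLqr : IsQuasireal L) :
    IsRepeatedRadical Q L ⊥ ⊤ ↔
      Relation.ReflTransGen
        (fun A B : IntermediateField Q L => RadicalStep Q L A B ∧
          ∃ h : A ≤ B,
            (Module.finrank A (IntermediateField.extendScalars h)).Prime)
        ⊥ ⊤ :=
  ⟨fun h => h.reflTransGen_primeRadicalStep hLqr,
    Relation.ReflTransGen.mono (fun _ _ hAB => hAB.1) _ _⟩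
end

section
/- Let N be a finite group, σ an automorphism of N of prime order p, and M a σ-invariant subnormal subgroup of N. Suppose σ acts without nontrivial fixed points on each factor of some σ-invariant subnormal series from M up to N. Then for any σ-invariant subgroups S ◁ R with M ⊆ S ⊆ R ⊆ N, the automorphism σ acts fixed-point-freely on the quotient R/S. -/
/-- `c 0 ⊴ c 1 ⊴ ⋯ ⊴ c r`: a chain of subgroups, each normal in the next. -/
def IsNormalChain {N : Type*} [Group N] (c : ℕ → Subgroup N) (r : ℕ) : Prop :=
  ∀ i < r, c i ≤ c (i + 1) ∧ ∀ x ∈ c (i + 1), ∀ m ∈ c i, x * m * x⁻¹ ∈ c i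

/-!
Descending the given series shows that `σ` fixes no coset of `M` in `N` other than `M` itself.
Since `σ` has order `p`, the number of cosets of `M` is then `≡ 1 (mod p)`, so `p ∤ [N : M]` and
hence `p ∤ [S : M]`. Now let `y = x⁻¹`, so that `σ (x) x⁻¹ ∈ S` says that `σ` maps the coset `yS`
to itself. The `[S : M]` cosets of `M` inside `yS` are permuted by `σ`; as their number is prime
to `p`, one of them is fixed, so it is `M`, and `yS = S`.
-/

open Pointwise MulAction

theorem Set.mem_zero_of_chain_descent {α : Type*} (f : α → α) {c : ℕ → Set α} {r : ℕ}
    (hmono : ∀ i < r, c i ⊆ c (i + 1))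
    (hstep : ∀ i < r, ∀ x ∈ c (i + 1), f x ∈ c i → x ∈ c i) :
    ∀ x ∈ c r, f x ∈ c 0 → x ∈ c 0 := by
  suffices ∀ j ≤ r, c 0 ⊆ c j ∧ ∀ x ∈ c j, f x ∈ c 0 → x ∈ c 0 from (this r le_rfl).2
  intro j hj
  induction j with
  | zero => exact ⟨subset_rfl, fun x hx _ => hx⟩
  | succ j ih =>
    obtain ⟨h0j, hdesc⟩ := ih (by omega)
    exact ⟨h0j.trans (hmono j hj), fun x hx hfx => hdesc x (hstep j hj x hx (h0j hfx)) hfx⟩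

theorem MulAction.toPerm_pow_eq_one {M α : Type*} [Group M] [MulAction M α] {a : M} {n : ℕ}
    (ha : a ^ n = 1) : (toPerm a : Equiv.Perm α) ^ n = 1 := by
  rw [← toPermHom_apply, ← map_pow, ha, map_one]

namespace Equiv.Perm

variable {α : Type*} {p : ℕ} [Fact p.Prime] {f : Perm α}

theorem exists_fixed_point_mem_of_prime (hf : f ^ p = 1) {s : Set α} [Finite s]
    (hs : Set.MapsTo f s s) (hcard : ¬ p ∣ Nat.card s) : ∃ x ∈ s, f x = x := by
  have := Fintype.ofFinite s
  have hpow : f.subtypePermOfFintype hs ^ p ^ 1 = 1 := by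
    ext
    simp [hf]
  obtain ⟨⟨x, hx⟩, hfx⟩ := exists_fixed_point_of_prime (by rwa [← Nat.card_eq_fintype_card]) hpow
  exact ⟨x, hx, congrArg Subtype.val hfx⟩

theorem not_dvd_card_of_unique_fixed_point [Finite α] (hf : f ^ p = 1) {a : α} (hfa : f a = a)
    (huniq : ∀ x, f x = x → x = a) : ¬ p ∣ Nat.card α := by
  have := Fintype.ofFinite α
  intro hdvd
  obtain ⟨b, hb, hba⟩ := exists_fixed_point_of_prime' (p := p) (n := 1)
    (by rwa [← Nat.card_eq_fintype_card]) (by rwa [pow_one]) hfa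
  exact hba (huniq b hb)

end Equiv.Perm

namespace Subgroup

variable {G : Type*} [Group G]

def quotientSubgroupOfEmbedding (H K : Subgroup G) : K ⧸ H.subgroupOf K ↪ G ⧸ H where
  toFun := Quotient.map' Subtype.val fun _ _ h => by
    rw [QuotientGroup.leftRel_apply] at h ⊢
    simpa [mem_subgroupOf] using h
  inj' := Quotient.ind₂' fun _ _ h => by
    simpa [QuotientGroup.eq, mem_subgroupOf] using h

@[simp]
theorem quotientSubgroupOfEmbedding_mk (H K : Subgroup G) (k : K) :
    quotientSubgroupOfEmbedding H K (k : K ⧸ H.subgroupOf K) = ((k : G) : G ⧸ H) :=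
  rfl

instance quotientAction_stabilizer (H : Subgroup G) :
    QuotientAction (stabilizer (MulAut G) H) H where
  inv_mul_mem s a a' h := by
    have : s • (a⁻¹ * a') ∈ (s : MulAut G) • H := smul_mem_pointwise_smul _ _ _ h
    rwa [s.2, smul_mul', smul_inv'] at this

/- In both lemmas, `hfree` says that the only coset of `H` fixed by `s` is `H`:
`s • (g : G ⧸ H) = g` unfolds to `(s • g)⁻¹ * g ∈ H`. -/
variable [Finite G] {p : ℕ} [Fact p.Prime] {H : Subgroup G} {s : stabilizer (MulAut G) H}

theorem not_dvd_index_of_fixedPointFree (hs : s ^ p = 1)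
    (hfree : ∀ g : G, (s • g)⁻¹ * g ∈ H → g ∈ H) : ¬ p ∣ H.index := by
  refine Equiv.Perm.not_dvd_card_of_unique_fixed_point (toPerm_pow_eq_one hs)
    (a := ((1 : G) : G ⧸ H)) (by simp) fun q hq => ?_
  induction q using QuotientGroup.induction_on with
  | H g =>
    rw [toPerm_apply, Quotient.smul_coe, QuotientGroup.eq] at hq
    rw [QuotientGroup.eq, mul_one, inv_mem_iff]
    exact hfree g hq

theorem mem_of_inv_smul_mul_mem (hs : s ^ p = 1) (hfree : ∀ g : G, (s • g)⁻¹ * g ∈ H → g ∈ H)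
    {K : Subgroup G} (hHK : H ≤ K) (hK : ∀ k ∈ K, s • k ∈ K) {y : G}
    (hy : (s • y)⁻¹ * y ∈ K) : y ∈ K := by
  let cosetsIn : K ⧸ H.subgroupOf K → G ⧸ H := (y • ·) ∘ quotientSubgroupOfEmbedding H K
  have hmaps : Set.MapsTo (toPerm s) (Set.range cosetsIn) (Set.range cosetsIn) := by
    rintro _ ⟨c, rfl⟩
    induction c using QuotientGroup.induction_on with
    | H k =>
      have hk : y⁻¹ * (s • y) * s • k ∈ K :=
        K.mul_mem (by simpa using K.inv_mem hy) (hK k k.2)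
      exact ⟨(⟨_, hk⟩ : K), by simp [cosetsIn, mul_assoc, smul_mul']⟩
  have hcard : ¬ p ∣ Nat.card (Set.range cosetsIn) := by
    rw [Nat.card_range_of_injective
      ((MulAction.injective y).comp (quotientSubgroupOfEmbedding H K).injective)]
    exact fun h => not_dvd_index_of_fixedPointFree hs hfree (h.trans (relIndex_dvd_index_of_le hHK))
  obtain ⟨_, ⟨c, rfl⟩, hfix⟩ :=
    Equiv.Perm.exists_fixed_point_mem_of_prime (toPerm_pow_eq_one hs) hmaps hcard
  induction c using QuotientGroup.induction_on with
  | H k =>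
    have : y * k ∈ H := hfree _ (by simpa [cosetsIn, QuotientGroup.eq] using hfix)
    simpa using K.mul_mem (hHK this) (K.inv_mem k.2)

end Subgroup

/-- Let `σ` be an automorphism of prime order `p` of a finite group `N`, and `M`
a `σ`-invariant subnormal subgroup such that `σ` acts fixed-point-freely on each
factor of some `σ`-invariant subnormal series from `M` to `N`. Then `σ` acts
fixed-point-freely on `R/S` for any `σ`-invariant `M ≤ S ⊴ R ≤ N`. -/
theorem stmt15 (N : Type*) [Group N] [Finite N] (p : ℕ) (hp : p.Prime)
    (σ : MulAut N) (hord : orderOf σ = p) (M : Subgroup N)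
    (hM : Subgroup.map σ.toMonoidHom M = M)
    (hser : ∃ (r : ℕ) (c : ℕ → Subgroup N),
      c 0 = M ∧ c r = ⊤ ∧ IsNormalChain c r ∧
      (∀ i ≤ r, Subgroup.map σ.toMonoidHom (c i) = c i) ∧
      (∀ i < r, ∀ x ∈ c (i + 1), σ x * x⁻¹ ∈ c i → x ∈ c i)) :
    ∀ R S : Subgroup N, M ≤ S → S ≤ R →
      (∀ x ∈ R, ∀ s ∈ S, x * s * x⁻¹ ∈ S) →
      Subgroup.map σ.toMonoidHom R = R → Subgroup.map σ.toMonoidHom S = S →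
      ∀ x ∈ R, σ x * x⁻¹ ∈ S → x ∈ S := by
  rintro R S hMS - - - hS x - hx
  have := Fact.mk hp
  obtain ⟨r, c, hc0, hcr, hchain, -, hstep⟩ := hser
  have hdescent : ∀ g : N, σ g * g⁻¹ ∈ M → g ∈ M := by
    simpa [hc0, hcr] using Set.mem_zero_of_chain_descent (fun g => σ g * g⁻¹)
      (c := fun i => (c i : Set N)) (fun i hi => (hchain i hi).1) hstep
  let s : stabilizer (MulAut N) M := ⟨σ, hM⟩
  have hs_apply : ∀ g, s • g = σ g := fun _ => rfl
  have hs : s ^ p = 1 := Subtype.ext (hord ▸ pow_orderOf_eq_one σ)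
  have hfree : ∀ g : N, (s • g)⁻¹ * g ∈ M → g ∈ M := fun g hg =>
    inv_mem_iff.mp (hdescent g⁻¹ (by simpa [hs_apply] using hg))
  have hsS : ∀ k ∈ S, s • k ∈ S := fun k hk => hS ▸ Subgroup.mem_map_of_mem _ hk
  simpa using Subgroup.mem_of_inv_smul_mul_mem hs hfree hMS hsS (y := x⁻¹)
    (by simpa [hs_apply] using hx)
end

section
/- The polynomial f(X) = X³ − 3X + 3 is irreducible over ℚ, has exactly one real root α, and the field ℚ[α] is not a repeated radical extension of ℚ. -/
/-!
Since `[ℚ(α) : ℚ] = 3` is prime, a radical tower ending at `ℚ(α)` must reach it in a single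
step, so `ℚ(α) = ℚ(β)` with `β` real and `βⁿ ∈ ℚ`. All complex conjugates of `β` have absolute
value `|β|`, so `|N(β)| = |β|³` and `β³ = d ∈ ℚ`. Write `α = a + u + v` with `u = bβ`, `v = cβ²`.
Then `uv` and `u³ + v³` are rational and `α - a` is a root of `t³ - 3uv t - (u³ + v³)`; comparing
with the minimal polynomial `X³ - 3X + 3` of `α` gives `a = 0`, `uv = 1`, `u³ + v³ = -3`. Hence
`(u³ - v³)² = 9 - 4 = 5`, although `u³ - v³ = b³d - c³d²` is rational.
-/

open Polynomial IntermediateField Module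

noncomputable def cubic : ℚ[X] := X ^ 3 - 3 * X + 3

theorem cubic_monic : cubic.Monic := by unfold cubic; monicity!

theorem cubic_natDegree : cubic.natDegree = 3 := by unfold cubic; compute_degree!

theorem aeval_cubic {E : Type*} [Field E] [Algebra ℚ E] (x : E) :
    aeval x cubic = x ^ 3 - 3 * x + 3 := by
  simp [cubic, map_ofNat]

theorem irreducible_cubic : Irreducible cubic := by
  let g : ℤ[X] := X ^ 3 - 3 * X + 3
  have hg : g.Monic := by unfold g; monicity!
  have hdeg : g.natDegree = 3 := by unfold g; compute_degree!
  have hmap : g.map (algebraMap ℤ ℚ) = cubic := by simp [g, cubic]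
  have hprime : (Ideal.span {(3 : ℤ)}).IsPrime :=
    (Ideal.span_singleton_prime (by norm_num)).mpr Int.prime_three
  rw [← hmap, ← hg.isPrimitive.irreducible_iff_irreducible_map_fraction_map]
  refine IsEisensteinAt.irreducible ⟨?_, ?_, ?_⟩ hprime hg.isPrimitive (by omega)
  · simp [hg.leadingCoeff, Ideal.mem_span_singleton]
  · intro n hn
    rw [hdeg] at hn
    interval_cases n <;> simp [g, coeff_X]
  · simp [g, Ideal.span_singleton_pow, Ideal.mem_span_singleton]

theorem lt_neg_two_of_cubic_eq_zero {x : ℝ} (hx : x ^ 3 - 3 * x + 3 = 0) : x < -2 := by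
  nlinarith [sq_nonneg (x - 1), sq_nonneg (x + 1)]

theorem existsUnique_cubic_eq_zero : ∃! x : ℝ, x ^ 3 - 3 * x + 3 = 0 := by
  obtain ⟨x, -, hx⟩ := intermediate_value_Icc (show (-3 : ℝ) ≤ -2 by norm_num)
    (f := fun x : ℝ => x ^ 3 - 3 * x + 3) (by fun_prop) (show (0 : ℝ) ∈ Set.Icc _ _ by norm_num)
  refine ⟨x, hx, fun y hy => ?_⟩
  have hx2 := lt_neg_two_of_cubic_eq_zero hx
  have hy2 := lt_neg_two_of_cubic_eq_zero hy
  have hfactor : (y - x) * (y ^ 2 + y * x + x ^ 2 - 3) = 0 := by linear_combination hy - hx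
  have hpos : y ^ 2 + y * x + x ^ 2 - 3 ≠ 0 := by nlinarith
  exact sub_eq_zero.mp ((mul_eq_zero.mp hfactor).resolve_right hpos)

section RootOfCubic

variable {E : Type*} [Field E] [Algebra ℚ E] {α : E}

theorem minpoly_eq_cubic (hα : aeval α cubic = 0) : minpoly ℚ α = cubic :=
  (minpoly.eq_of_irreducible_of_monic irreducible_cubic hα cubic_monic).symm

theorem coeffs_eq_zero_of_aeval_cubic_eq_zero (hα : aeval α cubic = 0) {r₀ r₁ r₂ : ℚ}
    (h : algebraMap ℚ E r₀ + algebraMap ℚ E r₁ * α + algebraMap ℚ E r₂ * α ^ 2 = 0) :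
    r₀ = 0 ∧ r₁ = 0 ∧ r₂ = 0 := by
  have hdvd : cubic ∣ C r₀ + C r₁ * X + C r₂ * X ^ 2 :=
    minpoly_eq_cubic hα ▸ minpoly.dvd ℚ α (by simpa using h)
  have hP : C r₀ + C r₁ * X + C r₂ * X ^ 2 = 0 := by
    refine eq_zero_of_dvd_of_degree_lt hdvd ((?_ : _ ≤ (2 : WithBot ℕ)).trans_lt ?_)
    · compute_degree
    · rw [degree_eq_natDegree cubic_monic.ne_zero, cubic_natDegree]; norm_num
  refine ⟨?_, ?_, ?_⟩
  · simpa using congrArg (coeff · 0) hP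
  · simpa using congrArg (coeff · 1) hP
  · simpa using congrArg (coeff · 2) hP

theorem sq_sub_cubes_eq_five {u v : E} (hα : aeval α cubic = 0) {a p s : ℚ}
    (hsum : α = algebraMap ℚ E a + u + v) (hprod : u * v = algebraMap ℚ E p)
    (hcubes : u ^ 3 + v ^ 3 = algebraMap ℚ E s) :
    (u ^ 3 - v ^ 3) ^ 2 = 5 := by
  obtain ⟨h₀, h₁, h₂⟩ := coeffs_eq_zero_of_aeval_cubic_eq_zero (r₀ := -a ^ 3 + 3 * p * a - s - 3)
    (r₁ := 3 * a ^ 2 - 3 * p + 3) (r₂ := -3 * a) hα <| by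
    simp only [map_add, map_sub, map_mul, map_pow, map_neg, map_ofNat]
    rw [← hprod, ← hcubes]
    subst hsum
    -- `(α - a)³ - 3uv (α - a) - (u³ + v³)` vanishes identically when `α = a + u + v`
    linear_combination -(aeval_cubic _).symm.trans hα
  have ha : a = 0 := by linarith
  have hp : p = 1 := by subst ha; linarith
  have hs : s = -3 := by subst ha; linarith
  subst ha hp hs
  simp only [map_one, map_neg, map_ofNat] at hprod hcubes
  linear_combination (u ^ 3 + v ^ 3 - 3) * hcubes - 4 * (u ^ 2 * v ^ 2 + u * v + 1) * hprod

end RootOfCubic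

section FieldExtension

variable {F E : Type*} [Field F] [Field E] [Algebra F E]

theorem eq_bot_of_isRepeatedRadical_of_le {K B : IntermediateField F E} [FiniteDimensional F K]
    (hK : (finrank F K).Prime)
    (hrad : ∀ β : E, (∃ n, 0 < n ∧ β ^ n ∈ (⊥ : IntermediateField F E)) → F⟮β⟯ ≠ K)
    (h : IsRepeatedRadical F E ⊥ B) (hBK : B ≤ K) : B = ⊥ := by
  induction h with
  | refl => rfl
  | tail _ hstep ih =>
    obtain ⟨β, hβ, rfl⟩ := hstep
    obtain rfl := ih (le_sup_left.trans hBK)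
    rw [bot_sup_eq] at hBK ⊢
    rcases hK.eq_one_or_self_of_dvd _ (finrank_dvd_of_le_right hBK) with h1 | hK'
    · exact finrank_eq_one_iff.mp h1
    · exact absurd (eq_of_le_of_finrank_eq hBK hK') (hrad β hβ)

theorem not_isRepeatedRadical {K : IntermediateField F E} [FiniteDimensional F K]
    (hK : (finrank F K).Prime)
    (hrad : ∀ β : E, (∃ n, 0 < n ∧ β ^ n ∈ (⊥ : IntermediateField F E)) → F⟮β⟯ ≠ K) :
    ¬ IsRepeatedRadical F E ⊥ K := fun h => hK.one_lt.ne' <| by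
  rw [eq_bot_of_isRepeatedRadical_of_le hK hrad h le_rfl, IntermediateField.finrank_bot]

theorem exists_eq_add_mul_add_mul_sq_of_finrank_eq_three {β α : E} (h3 : finrank F F⟮β⟯ = 3)
    (hα : α ∈ F⟮β⟯) :
    ∃ a b c : F, α = algebraMap F E a + algebraMap F E b * β + algebraMap F E c * β ^ 2 := by
  have : FiniteDimensional F F⟮β⟯ := .of_finrank_pos (by omega)
  have hβ : IsIntegral F β := isIntegral_iff.mp (IsIntegral.of_finite F (AdjoinSimple.gen F β))
  obtain ⟨p, hdeg, hp⟩ := (adjoin.powerBasis hβ).exists_eq_aeval ⟨α, hα⟩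
  rw [adjoin.powerBasis_dim, ← adjoin.finrank hβ, h3] at hdeg
  refine ⟨p.coeff 0, p.coeff 1, p.coeff 2, ?_⟩
  have hp' := congrArg Subtype.val hp
  simp only [adjoin.powerBasis_gen, AdjoinSimple.coe_aeval_gen_apply] at hp'
  rw [hp', aeval_eq_sum_range' hdeg]
  simp [Finset.sum_range_succ, Algebra.smul_def]

end FieldExtension

theorem exists_rat_pow_finrank_eq {β : ℝ} {n : ℕ} (hn : 0 < n)
    (hβ : β ^ n ∈ (⊥ : IntermediateField ℚ ℝ)) : ∃ d : ℚ, β ^ finrank ℚ ℚ⟮β⟯ = d := by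
  obtain ⟨q, hq⟩ := mem_bot.mp hβ
  have hint : IsIntegral ℚ β := IsIntegral.of_pow hn (hq ▸ isIntegral_algebraMap)
  have := adjoin.finiteDimensional hint
  have hconj (σ : ℚ⟮β⟯ →ₐ[ℚ] ℂ) : ‖σ (AdjoinSimple.gen ℚ β)‖ = |β| := by
    refine (pow_left_inj₀ (norm_nonneg _) (abs_nonneg β) hn.ne').mp ?_
    have hgen : AdjoinSimple.gen ℚ β ^ n = algebraMap ℚ ℚ⟮β⟯ q := Subtype.ext (by simp [← hq])
    rw [← norm_pow, ← map_pow, ← abs_pow, hgen, AlgHom.commutes, ← hq]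
    simp
  have hnorm : |(Algebra.norm ℚ (AdjoinSimple.gen ℚ β) : ℝ)| = |β| ^ finrank ℚ ℚ⟮β⟯ := by
    have := congrArg norm (Algebra.norm_eq_prod_embeddings ℚ ℂ (AdjoinSimple.gen ℚ β))
    rw [norm_prod, Finset.prod_congr rfl fun σ _ => hconj σ, Finset.prod_const, Finset.card_univ,
      AlgHom.card] at this
    simpa using this
  rcases abs_choice (β ^ finrank ℚ ℚ⟮β⟯) with h | h
  · exact ⟨|Algebra.norm ℚ (AdjoinSimple.gen ℚ β)|, by push_cast; rw [hnorm, ← abs_pow, h]⟩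
  · exact ⟨-|Algebra.norm ℚ (AdjoinSimple.gen ℚ β)|, by
      push_cast; rw [hnorm, ← abs_pow, h, neg_neg]⟩

theorem finrank_adjoin_root_cubic {α : ℝ} (hα : aeval α cubic = 0) : finrank ℚ ℚ⟮α⟯ = 3 := by
  rw [adjoin.finrank ⟨cubic, cubic_monic, hα⟩, minpoly_eq_cubic hα, cubic_natDegree]

theorem adjoin_radical_ne_adjoin_root_cubic {α β : ℝ} (hα : aeval α cubic = 0) {n : ℕ} (hn : 0 < n)
    (hβ : β ^ n ∈ (⊥ : IntermediateField ℚ ℝ)) : ℚ⟮β⟯ ≠ ℚ⟮α⟯ := by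
  intro heq
  have h3 : finrank ℚ ℚ⟮β⟯ = 3 := heq ▸ finrank_adjoin_root_cubic hα
  obtain ⟨d, hd⟩ := exists_rat_pow_finrank_eq hn hβ
  rw [h3] at hd
  obtain ⟨a, b, c, habc⟩ :=
    exists_eq_add_mul_add_mul_sq_of_finrank_eq_three h3 (heq ▸ mem_adjoin_simple_self ℚ α)
  have h5 := sq_sub_cubes_eq_five hα habc (p := b * c * d) (s := b ^ 3 * d + c ^ 3 * d ^ 2)
    (by simp only [eq_ratCast]; push_cast; linear_combination (b : ℝ) * c * hd)
    (by
      simp only [eq_ratCast]; push_cast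
      linear_combination ((b : ℝ) ^ 3 + c ^ 3 * (β ^ 3 + d)) * hd)
  have hdiff : ((b ^ 3 * d - c ^ 3 * d ^ 2 : ℚ) : ℝ) = (b * β) ^ 3 - (c * β ^ 2) ^ 3 := by
    push_cast; linear_combination -((b : ℝ) ^ 3 - c ^ 3 * (β ^ 3 + d)) * hd
  have : IsSquare (5 : ℚ) := ⟨b ^ 3 * d - c ^ 3 * d ^ 2, by
    rw [← sq]
    exact_mod_cast (hdiff ▸ h5).symm⟩
  norm_num at this

/-- The polynomial `X ^ 3 - 3 X + 3` is irreducible over `ℚ`, has exactly one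
real root `α`, and `ℚ[α]` is not a repeated radical extension of `ℚ`. -/
theorem stmt19 :
    Irreducible (Polynomial.X ^ 3 - 3 * Polynomial.X + 3 : Polynomial ℚ) ∧
    (∃! α : ℝ,
      Polynomial.aeval α (Polynomial.X ^ 3 - 3 * Polynomial.X + 3 : Polynomial ℚ) = 0) ∧
    (∀ α : ℝ,
      Polynomial.aeval α (Polynomial.X ^ 3 - 3 * Polynomial.X + 3 : Polynomial ℚ) = 0 →
      ¬ IsRepeatedRadical ℚ ℝ ⊥ (IntermediateField.adjoin ℚ {α})) := by
  refine ⟨irreducible_cubic, ?_, fun α (hα : aeval α cubic = 0) => ?_⟩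
  · show ∃! α : ℝ, aeval α cubic = 0
    simpa only [aeval_cubic] using existsUnique_cubic_eq_zero
  · have := adjoin.finiteDimensional ⟨cubic, cubic_monic, hα⟩
    refine not_isRepeatedRadical (by rw [finrank_adjoin_root_cubic hα]; norm_num) ?_
    rintro β ⟨n, hn, hβ⟩
    exact adjoin_radical_ne_adjoin_root_cubic hα hn hβ
end
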